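/- arXiv:2011.13985 — 3 statements merged into one kernel-verified Lean document; each statement's English description precedes it below -/
import Mathlib

section
/- Let g, f be formal power series over ℚ with g(0) = 1 and f = X·q where q(0) = 1, let M be the Riordan matrix of (g, f), let P̃ be the second production matrix of M, and let T be the matrix produced by P̃. Let N be the inverse of the Riordan matrix of (1/q, X/q). Then T = N·M, i.e. for all n, k, T_{n,k} = ∑_{i=0}^{n} N_{n,i}·M_{i,k}. -/
open PowerSeries Finset

/-- The Riordan matrix of the pair `(g, f)`: entries `M n k = [Xⁿ] (g * fᵏ)`. -/
noncomputable def riordan (g f : PowerSeries ℚ) (n k : ℕ) : ℚ :=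
  PowerSeries.coeff n (g * f ^ k)

lemma riordan_tri (h f : PowerSeries ℚ) {n k : ℕ} (hnk : n < k) :
    riordan h (X * f) n k = 0 := by
  have hdvd : (X : PowerSeries ℚ) ^ k ∣ h * (X * f) ^ k := by
    rw [mul_pow]
    exact Dvd.dvd.mul_left (dvd_mul_right _ _) h
  exact PowerSeries.X_pow_dvd_iff.mp hdvd n hnk

lemma riordan_shift (g f : PowerSeries ℚ) (n k : ℕ) :
    riordan g (X * f) (n + 1) (k + 1) = PowerSeries.coeff n (f * g * (X * f) ^ k) := by
  show PowerSeries.coeff (n+1) (g * (X * f) ^ (k+1)) = _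
  have h : g * (X * f) ^ (k + 1) = X * (f * g * (X * f) ^ k) := by ring
  rw [h, coeff_succ_X_mul]

lemma riordan_diag (h f : PowerSeries ℚ) (n : ℕ) :
    riordan h (X * f) n n = constantCoeff h * (constantCoeff f) ^ n := by
  show PowerSeries.coeff n (h * (X * f) ^ n) = _
  have h1 : h * (X * f) ^ n = X ^ n * (h * f ^ n) := by ring
  have h2 := PowerSeries.coeff_X_pow_mul (h * f ^ n) n 0
  rw [zero_add] at h2
  rw [h1, h2, PowerSeries.coeff_zero_eq_constantCoeff, map_mul, map_pow]

theorem second_production_matrix_factorization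
    (g q : PowerSeries ℚ)
    (hg : constantCoeff g = 1) (hq : constantCoeff q = 1)
    (P T N : ℕ → ℕ → ℚ)
    (hP : ∀ n k, ∑ j ∈ range (n + 1), riordan g (X * q) n j * P j k
          = riordan g (X * q) (n + 2) k)
    (hT0 : ∀ k, T 0 k = if k = 0 then 1 else 0)
    (hT : ∀ n k, T (n + 1) k = ∑ j ∈ range (n + 2), T n j * P j (k + 1))
    (hN1 : ∀ n k, ∑ j ∈ range (n + 1), riordan q⁻¹ (X * q⁻¹) n j * N j k
          = if n = k then 1 else 0)
    (hN2 : ∀ n k, ∑ j ∈ range (n + 1), N n j * riordan q⁻¹ (X * q⁻¹) j k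
          = if n = k then 1 else 0) :
    ∀ n k, T n k = ∑ i ∈ range (n + 1), N n i * riordan g (X * q) i k := by
  have hq0 : constantCoeff q ≠ 0 := by rw [hq]; norm_num
  have hqinv : constantCoeff q⁻¹ = 1 := by
    rw [PowerSeries.constantCoeff_inv, hq]; norm_num
  have hAdiag : ∀ n, riordan q⁻¹ (X * q⁻¹) n n = 1 := by
    intro n; rw [riordan_diag, hqinv]; simp
  have hAtri : ∀ {n k : ℕ}, n < k → riordan q⁻¹ (X * q⁻¹) n k = 0 :=
    fun h => riordan_tri _ _ h
  -- N is lower triangular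
  have hNtri : ∀ n k, n < k → N n k = 0 := by
    intro n
    induction n using Nat.strong_induction_on with
    | _ n ih =>
      intro k hnk
      have h1 := hN1 n k
      rw [if_neg (by omega), Finset.sum_range_succ, hAdiag n, one_mul] at h1
      have h2 : ∑ j ∈ range n, riordan q⁻¹ (X * q⁻¹) n j * N j k = 0 := by
        apply Finset.sum_eq_zero
        intro j hj
        rw [ih j (mem_range.mp hj) k (by have := mem_range.mp hj; omega), mul_zero]
      rw [h2, zero_add] at h1
      exact h1
  -- expansion of an arbitrary series in the columns of A
  have hexp : ∀ (F : PowerSeries ℚ) (j : ℕ),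
      ∑ m ∈ range (j + 1), riordan q⁻¹ (X * q⁻¹) j m
          * (∑ l ∈ range (m + 1), N m l * PowerSeries.coeff l F)
        = PowerSeries.coeff j F := by
    intro F j
    have step1 : ∀ m ∈ range (j + 1),
        riordan q⁻¹ (X * q⁻¹) j m * (∑ l ∈ range (m + 1), N m l * PowerSeries.coeff l F)
          = ∑ l ∈ range (j + 1),
              riordan q⁻¹ (X * q⁻¹) j m * (N m l * PowerSeries.coeff l F) := by
      intro m hm
      rw [Finset.mul_sum]
      apply Finset.sum_subset
      · exact Finset.range_subset_range.mpr (by have := mem_range.mp hm; omega)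
      · intro x _ hxm
        simp only [mem_range, not_lt] at hxm
        rw [hNtri m x (by omega), zero_mul, mul_zero]
    rw [Finset.sum_congr rfl step1, Finset.sum_comm]
    have step2 : ∀ l ∈ range (j + 1),
        ∑ m ∈ range (j + 1),
            riordan q⁻¹ (X * q⁻¹) j m * (N m l * PowerSeries.coeff l F)
          = (if j = l then 1 else 0) * PowerSeries.coeff l F := by
      intro l _
      rw [← hN1 j l, Finset.sum_mul]
      exact Finset.sum_congr rfl fun m _ => by ring
    rw [Finset.sum_congr rfl step2]
    simp
  -- key shift identity
  have hkey : ∀ (F : PowerSeries ℚ) (i : ℕ),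
      PowerSeries.coeff (i + 1) (q * F)
        = ∑ m ∈ range (i + 1), riordan q⁻¹ (X * q⁻¹) i m
            * (∑ l ∈ range (m + 2), N (m + 1) l * PowerSeries.coeff l F) := by
    intro F i
    have hQB : ∀ m : ℕ, PowerSeries.coeff (i + 1) (q * (q⁻¹ * (X * q⁻¹) ^ m))
        = if m = 0 then 0 else riordan q⁻¹ (X * q⁻¹) i (m - 1) := by
      intro m
      match m with
      | 0 =>
        have e : q * (q⁻¹ * (X * q⁻¹) ^ 0) = 1 := by
          rw [pow_zero, mul_one, PowerSeries.mul_inv_cancel q hq0]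
        rw [e]; simp
      | m + 1 =>
        have e : q * (q⁻¹ * (X * q⁻¹) ^ (m + 1))
            = (q * q⁻¹) * (X * (q⁻¹ * (X * q⁻¹) ^ m)) := by ring
        rw [e, PowerSeries.mul_inv_cancel q hq0, one_mul, coeff_succ_X_mul]
        rw [if_neg (Nat.succ_ne_zero m)]
        rfl
    rw [PowerSeries.coeff_mul]
    have s1 : ∀ p ∈ antidiagonal (i + 1),
        PowerSeries.coeff p.1 q * PowerSeries.coeff p.2 F
          = ∑ m ∈ range (i + 2), PowerSeries.coeff p.1 q
              * (riordan q⁻¹ (X * q⁻¹) p.2 m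
                  * (∑ l ∈ range (m + 1), N m l * PowerSeries.coeff l F)) := by
      intro p hp
      have hp2 : p.2 ≤ i + 1 := by
        rw [Finset.HasAntidiagonal.mem_antidiagonal] at hp; omega
      rw [← hexp F p.2, Finset.mul_sum]
      apply Finset.sum_subset (Finset.range_subset_range.mpr (by omega))
      intro x _ hxm
      simp only [mem_range, not_lt] at hxm
      rw [hAtri (by omega), zero_mul, mul_zero]
    rw [Finset.sum_congr rfl s1, Finset.sum_comm]
    have s2 : ∀ m ∈ range (i + 2),
        ∑ p ∈ antidiagonal (i + 1),
            PowerSeries.coeff p.1 q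
              * (riordan q⁻¹ (X * q⁻¹) p.2 m
                  * (∑ l ∈ range (m + 1), N m l * PowerSeries.coeff l F))
          = PowerSeries.coeff (i + 1) (q * (q⁻¹ * (X * q⁻¹) ^ m))
              * (∑ l ∈ range (m + 1), N m l * PowerSeries.coeff l F) := by
      intro m _
      rw [PowerSeries.coeff_mul, Finset.sum_mul]
      refine Finset.sum_congr rfl fun p _ => ?_
      rw [show riordan q⁻¹ (X * q⁻¹) p.2 m
            = PowerSeries.coeff p.2 (q⁻¹ * (X * q⁻¹) ^ m) from rfl]
      ring
    rw [Finset.sum_congr rfl s2, Finset.sum_range_succ']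
    rw [hQB 0, if_pos rfl, zero_mul, add_zero]
    apply Finset.sum_congr rfl
    intro m _
    rw [hQB (m + 1), if_neg (Nat.succ_ne_zero m)]
    rfl
  -- the matrix identity
  have hstar : ∀ n k : ℕ,
      ∑ i ∈ range (n + 1), N n i * riordan g (X * q) (i + 2) (k + 1)
        = ∑ i ∈ range (n + 2), N (n + 1) i * riordan g (X * q) i k := by
    intro n k
    have hMF : ∀ i : ℕ, riordan g (X * q) i k
        = PowerSeries.coeff i (g * (X * q) ^ k) := fun i => rfl
    have hM2 : ∀ i : ℕ, riordan g (X * q) (i + 2) (k + 1)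
        = PowerSeries.coeff (i + 1) (q * (g * (X * q) ^ k)) := by
      intro i
      rw [riordan_shift g q (i + 1) k]
      congr 1
      ring
    calc ∑ i ∈ range (n + 1), N n i * riordan g (X * q) (i + 2) (k + 1)
        = ∑ i ∈ range (n + 1), N n i
            * ∑ m ∈ range (n + 1), riordan q⁻¹ (X * q⁻¹) i m
                * (∑ l ∈ range (m + 2),
                    N (m + 1) l * PowerSeries.coeff l (g * (X * q) ^ k)) := by
          apply Finset.sum_congr rfl
          intro i hi
          rw [hM2 i, hkey]
          congr 1
          apply Finset.sum_subset
            (Finset.range_subset_range.mpr (by have := mem_range.mp hi; omega))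
          intro x _ hx
          simp only [mem_range, not_lt] at hx
          rw [hAtri (by omega), zero_mul]
      _ = ∑ m ∈ range (n + 1),
            (∑ i ∈ range (n + 1), N n i * riordan q⁻¹ (X * q⁻¹) i m)
              * (∑ l ∈ range (m + 2),
                  N (m + 1) l * PowerSeries.coeff l (g * (X * q) ^ k)) := by
          have expand : ∀ i ∈ range (n + 1),
              N n i * ∑ m ∈ range (n + 1), riordan q⁻¹ (X * q⁻¹) i m
                  * (∑ l ∈ range (m + 2),
                      N (m + 1) l * PowerSeries.coeff l (g * (X * q) ^ k))
                = ∑ m ∈ range (n + 1), N n i * riordan q⁻¹ (X * q⁻¹) i m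
                    * (∑ l ∈ range (m + 2),
                        N (m + 1) l * PowerSeries.coeff l (g * (X * q) ^ k)) := by
            intro i _
            rw [Finset.mul_sum]
            exact Finset.sum_congr rfl fun m _ => by ring
          rw [Finset.sum_congr rfl expand, Finset.sum_comm]
          refine Finset.sum_congr rfl fun m _ => ?_
          rw [Finset.sum_mul]
      _ = ∑ m ∈ range (n + 1),
            (if n = m then (1:ℚ) else 0)
              * (∑ l ∈ range (m + 2),
                  N (m + 1) l * PowerSeries.coeff l (g * (X * q) ^ k)) := by
          refine Finset.sum_congr rfl fun m _ => ?_
          rw [hN2 n m]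
      _ = ∑ l ∈ range (n + 2), N (n + 1) l * PowerSeries.coeff l (g * (X * q) ^ k) := by
          simp only [ite_mul, one_mul, zero_mul]
          rw [Finset.sum_ite_eq (range (n + 1)) n, if_pos (self_mem_range_succ n)]
      _ = ∑ i ∈ range (n + 2), N (n + 1) i * riordan g (X * q) i k := by
          refine Finset.sum_congr rfl fun l _ => ?_
          rw [hMF]
  -- main induction
  intro n
  induction n with
  | zero =>
    intro k
    have hN00 : N 0 0 = 1 := by
      have h := hN1 0 0
      rw [Finset.sum_range_one, hAdiag 0, one_mul, if_pos rfl] at h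
      exact h
    have hM0 : riordan g (X * q) 0 k = if k = 0 then 1 else 0 := by
      match k with
      | 0 =>
        show PowerSeries.coeff 0 (g * (X * q) ^ 0) = _
        rw [pow_zero, mul_one, PowerSeries.coeff_zero_eq_constantCoeff, hg]
        simp
      | k + 1 =>
        rw [riordan_tri g q (Nat.succ_pos k)]
        simp
    rw [hT0, Finset.sum_range_one, hN00, hM0, one_mul]
  | succ n ih =>
    intro k
    rw [hT n k]
    have e1 : ∀ j ∈ range (n + 2), T n j * P j (k + 1)
        = ∑ i ∈ range (n + 1), N n i * riordan g (X * q) i j * P j (k + 1) := by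
      intro j _
      rw [ih j, Finset.sum_mul]
    rw [Finset.sum_congr rfl e1, Finset.sum_comm]
    have e2 : ∀ i ∈ range (n + 1),
        ∑ j ∈ range (n + 2), N n i * riordan g (X * q) i j * P j (k + 1)
          = N n i * riordan g (X * q) (i + 2) (k + 1) := by
      intro i hi
      have hsub : range (i + 1) ⊆ range (n + 2) :=
        Finset.range_subset_range.mpr (by have := mem_range.mp hi; omega)
      have hz : ∀ x ∈ range (n + 2), x ∉ range (i + 1)
          → N n i * riordan g (X * q) i x * P x (k + 1) = 0 := by
        intro x _ hx
        simp only [mem_range, not_lt] at hx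
        rw [riordan_tri g q (by omega), mul_zero, zero_mul]
      rw [← Finset.sum_subset hsub hz, ← hP i (k + 1), Finset.mul_sum]
      refine Finset.sum_congr rfl fun j _ => ?_
      ring
    rw [Finset.sum_congr rfl e2]
    exact hstar n k
end

section
/- Let g, f be formal power series over ℚ with g(0) = 1 and f = X·q where q(0) = 1, let M be the Riordan matrix of (g, f), let f̄ = X·q̄ (q̄(0) = 1) be the compositional inverse of f, and let P₃ be the unique matrix with ∑_{j=0}^{n} M_{n,j}·(P₃)_{j,k} = M_{n+3,k} for all n, k. Then for every k ≥ 3, the generating function of column k of P₃ satisfies q̄³·(∑_{n≥0} (P₃)_{n,k}X^n) = X^{k−3}. (Equivalently, the A-sequence of the third production matrix of M has generating function X³/f̄³.) -/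
open PowerSeries Finset

/-- Substitution of the power series `a` (with zero constant term) into `f`,
i.e. the composite `f(a)`. -/
noncomputable def psSubst (a f : PowerSeries ℚ) : PowerSeries ℚ :=
  PowerSeries.mk fun n =>
    PowerSeries.coeff n
      (∑ i ∈ Finset.range (n + 1), PowerSeries.C (PowerSeries.coeff i f) * a ^ i)

variable {a b : PowerSeries ℚ}

lemma coeff_pow_zero (ha : constantCoeff a = 0) {n i : ℕ} (h : n < i) :
    PowerSeries.coeff n (a ^ i) = 0 := by
  have hd : (X : ℚ⟦X⟧) ^ i ∣ a ^ i :=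
    pow_dvd_pow_of_dvd (PowerSeries.X_dvd_iff.2 ha) i
  exact PowerSeries.X_pow_dvd_iff.1 hd n h

lemma coeff_psSubst (ha : constantCoeff a = 0) (f : PowerSeries ℚ) {n m : ℕ} (h : n < m) :
    PowerSeries.coeff n (psSubst a f)
      = ∑ i ∈ range m, PowerSeries.coeff i f * PowerSeries.coeff n (a ^ i) := by
  rw [psSubst, PowerSeries.coeff_mk, map_sum]
  simp only [PowerSeries.coeff_C_mul]
  refine Finset.sum_subset (range_subset_range.2 h) ?_
  intro i hi hni
  simp only [mem_range] at hi hni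
  rw [coeff_pow_zero ha (by omega), mul_zero]

lemma psSubst_coe (ha : constantCoeff a = 0) (P : Polynomial ℚ) :
    psSubst a (P : PowerSeries ℚ) = P.eval₂ (PowerSeries.C) a := by
  ext n
  set m := max (n + 1) (P.natDegree + 1) with hm
  rw [coeff_psSubst ha _ (lt_of_lt_of_le (Nat.lt_succ_self n) (le_max_left _ _)),
    Polynomial.eval₂_eq_sum_range' (PowerSeries.C)
      (lt_of_lt_of_le (Nat.lt_succ_self _) (le_max_right _ _)) a, map_sum]
  refine Finset.sum_congr rfl fun i _ => ?_
  rw [Polynomial.coeff_coe, PowerSeries.coeff_C_mul]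

lemma psSubst_mul (ha : constantCoeff a = 0) (f g : PowerSeries ℚ) :
    psSubst a (f * g) = psSubst a f * psSubst a g := by
  ext n
  have key : ∀ h : ℚ⟦X⟧, ∀ j, j ≤ n → PowerSeries.coeff j (psSubst a h)
      = PowerSeries.coeff j (psSubst a ((trunc (n + 1) h : Polynomial ℚ) : ℚ⟦X⟧)) := by
    intro h j hj
    rw [coeff_psSubst ha _ (by omega : j < n + 1), coeff_psSubst ha _ (by omega : j < n + 1)]
    refine Finset.sum_congr rfl fun i hi => ?_
    rw [Polynomial.coeff_coe, coeff_trunc, if_pos (mem_range.1 hi)]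
  have t1 : PowerSeries.coeff n (psSubst a (f * g))
      = PowerSeries.coeff n (psSubst a
        (((trunc (n + 1) f * trunc (n + 1) g : Polynomial ℚ) : ℚ⟦X⟧))) := by
    rw [key _ n le_rfl, Polynomial.coe_mul]
    have h2 := key ((trunc (n + 1) f : ℚ⟦X⟧) * (trunc (n + 1) g : ℚ⟦X⟧)) n le_rfl
    rw [h2, trunc_trunc_mul_trunc]
  rw [t1, psSubst_coe ha, Polynomial.eval₂_mul, ← psSubst_coe ha, ← psSubst_coe ha,
    PowerSeries.coeff_mul, PowerSeries.coeff_mul]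
  refine Finset.sum_congr rfl fun p hp => ?_
  have hp1 : p.1 ≤ n := Finset.HasAntidiagonal.antidiagonal.fst_le hp
  have hp2 : p.2 ≤ n := Finset.HasAntidiagonal.antidiagonal.snd_le hp
  rw [← key f p.1 hp1, ← key g p.2 hp2]

lemma psSubst_one (ha : constantCoeff a = 0) : psSubst a 1 = 1 := by
  have := psSubst_coe ha 1
  rwa [Polynomial.coe_one, Polynomial.eval₂_one] at this

lemma psSubst_pow (ha : constantCoeff a = 0) (f : PowerSeries ℚ) (j : ℕ) :
    psSubst a (f ^ j) = psSubst a f ^ j := by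
  induction j with
  | zero => simpa using psSubst_one ha
  | succ j ih => rw [pow_succ, pow_succ, psSubst_mul ha, ih]

lemma psSubst_X (ha : constantCoeff a = 0) : psSubst a X = a := by
  have := psSubst_coe ha Polynomial.X
  rwa [Polynomial.coe_X, Polynomial.eval₂_X] at this

lemma psSubst_id (f : PowerSeries ℚ) : psSubst X f = f := by
  ext n
  rw [coeff_psSubst PowerSeries.constantCoeff_X f (Nat.lt_succ_self n)]
  rw [Finset.sum_eq_single n]
  · rw [PowerSeries.coeff_X_pow, if_pos rfl, mul_one]
  · intro i _ hne
    rw [PowerSeries.coeff_X_pow, if_neg (fun h => hne h.symm), mul_zero]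
  · intro h; exact absurd (Finset.self_mem_range_succ n) h

lemma constantCoeff_psSubst (hb : constantCoeff b = 0) (f : PowerSeries ℚ) :
    constantCoeff (psSubst b f) = constantCoeff f := by
  have := coeff_psSubst hb f (Nat.lt_succ_self 0)
  simp only [range_one, sum_singleton, pow_zero, PowerSeries.coeff_one] at this
  simpa [PowerSeries.coeff_zero_eq_constantCoeff] using this

lemma psSubst_comp (ha : constantCoeff a = 0) (hb : constantCoeff b = 0)
    (f : PowerSeries ℚ) :
    psSubst b (psSubst a f) = psSubst (psSubst b a) f := by
  have hba : constantCoeff (psSubst b a) = 0 := by rw [constantCoeff_psSubst hb, ha]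
  ext n
  rw [coeff_psSubst hb _ (Nat.lt_succ_self n), coeff_psSubst hba f (Nat.lt_succ_self n)]
  have lhs : ∀ i ∈ range (n + 1), PowerSeries.coeff i (psSubst a f) * PowerSeries.coeff n (b ^ i)
      = ∑ j ∈ range (n + 1),
          PowerSeries.coeff j f * (PowerSeries.coeff i (a ^ j) * PowerSeries.coeff n (b ^ i)) := by
    intro i hi
    rw [coeff_psSubst ha f (mem_range.1 hi), Finset.sum_mul]
    exact Finset.sum_congr rfl fun j _ => by ring
  rw [Finset.sum_congr rfl lhs, Finset.sum_comm]
  refine Finset.sum_congr rfl fun j _ => ?_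
  rw [← psSubst_pow hb a j, coeff_psSubst hb _ (Nat.lt_succ_self n), ← Finset.mul_sum]

theorem third_production_matrix_A_sequence
    (g q qbar : PowerSeries ℚ)
    (hg : constantCoeff g = 1) (hq : constantCoeff q = 1)
    (hqbar : constantCoeff qbar = 1)
    (hcomp : psSubst (X * qbar) (X * q) = X)
    (P3 : ℕ → ℕ → ℚ)
    (hP3 : ∀ n k, ∑ j ∈ range (n + 1), riordan g (X * q) n j * P3 j k
          = riordan g (X * q) (n + 3) k) :
    ∀ k, 3 ≤ k → qbar ^ 3 * PowerSeries.mk (fun n => P3 n k) = X ^ (k - 3) := by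
  intro k hk
  have hXq : constantCoeff (X * q : ℚ⟦X⟧) = 0 := by simp
  have hXqb : constantCoeff (X * qbar : ℚ⟦X⟧) = 0 := by simp
  set A : ℚ⟦X⟧ := PowerSeries.mk (fun n => P3 n k) with hA
  have h1 : ∀ n, PowerSeries.coeff n (g * psSubst (X * q) A)
      = riordan g (X * q) (n + 3) k := by
    intro n
    rw [← hP3 n k, PowerSeries.coeff_mul]
    have e1 : ∀ p ∈ antidiagonal n,
        PowerSeries.coeff p.1 g * PowerSeries.coeff p.2 (psSubst (X * q) A)
        = ∑ i ∈ range (n + 1), PowerSeries.coeff i A * PowerSeries.coeff p.1 g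
            * PowerSeries.coeff p.2 ((X * q) ^ i) := by
      intro p hp
      rw [coeff_psSubst hXq A
        (show p.2 < n + 1 from Nat.lt_succ_of_le (Finset.HasAntidiagonal.antidiagonal.snd_le hp)), Finset.mul_sum]
      exact Finset.sum_congr rfl fun i _ => by ring
    rw [Finset.sum_congr rfl e1, Finset.sum_comm]
    refine Finset.sum_congr rfl fun i _ => ?_
    simp only [riordan, PowerSeries.coeff_mul, Finset.sum_mul]
    refine Finset.sum_congr rfl fun p _ => ?_
    simp only [hA, PowerSeries.coeff_mk]
    ring
  have h2 : X ^ 3 * (g * psSubst (X * q) A) = g * (X * q) ^ k := by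
    ext n
    rcases lt_or_ge n 3 with h | h
    · rw [PowerSeries.coeff_X_pow_mul', if_neg (by omega)]
      have e : g * (X * q) ^ k = X ^ k * (g * q ^ k) := by rw [mul_pow]; ring
      rw [e, PowerSeries.coeff_X_pow_mul', if_neg (by omega)]
    · obtain ⟨d, rfl⟩ : ∃ d, n = d + 3 := ⟨n - 3, by omega⟩
      rw [PowerSeries.coeff_X_pow_mul, h1 d]
      simp only [riordan]
  have hg0 : g ≠ 0 := fun h => by simp [h] at hg
  have hX3 : (X : ℚ⟦X⟧) ^ 3 ≠ 0 := pow_ne_zero _ PowerSeries.X_ne_zero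
  have h3 : psSubst (X * q) A = X ^ (k - 3) * q ^ k := by
    apply mul_left_cancel₀ (mul_ne_zero hX3 hg0)
    calc X ^ 3 * g * psSubst (X * q) A = X ^ 3 * (g * psSubst (X * q) A) := by ring
      _ = g * (X * q) ^ k := h2
      _ = X ^ 3 * g * (X ^ (k - 3) * q ^ k) := by
          rw [mul_pow]
          have e : (X : ℚ⟦X⟧) ^ k = X ^ 3 * X ^ (k - 3) := by
            rw [← pow_add]; congr 1; omega
          rw [e]; ring
  have hQ : qbar * psSubst (X * qbar) q = 1 := by
    apply mul_left_cancel₀ (PowerSeries.X_ne_zero (R := ℚ))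
    have hc := hcomp
    rw [psSubst_mul hXqb X q, psSubst_X hXqb] at hc
    rw [mul_one, ← mul_assoc]; exact hc
  have h4 : A = X ^ (k - 3) * qbar ^ (k - 3) * (psSubst (X * qbar) q) ^ k := by
    have hc := congrArg (psSubst (X * qbar)) h3
    rw [psSubst_comp hXq hXqb A, hcomp, psSubst_id] at hc
    rw [hc, psSubst_mul hXqb, psSubst_pow hXqb, psSubst_pow hXqb, psSubst_X hXqb]
    ring
  rw [h4]
  calc qbar ^ 3 * (X ^ (k - 3) * qbar ^ (k - 3) * (psSubst (X * qbar) q) ^ k)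
      = X ^ (k - 3) * (qbar ^ (3 + (k - 3)) * (psSubst (X * qbar) q) ^ k) := by
        rw [pow_add]; ring
    _ = X ^ (k - 3) * (qbar * psSubst (X * qbar) q) ^ k := by
        rw [(by omega : 3 + (k - 3) = k), mul_pow]
    _ = X ^ (k - 3) := by rw [hQ, one_pow, mul_one]
end

section
/- Let r be a rational number, let C(X) be the Catalan number generating function, and let M(r) be the Riordan matrix of (C(rX)², X·C(rX)²), i.e. M(r)_{n,k} = [X^n](X^k·C(rX)^{2k+2}). Then the production matrix of M(r) is tridiagonal: for all n and all k (with the convention M(r)_{n,−1} = 0), M(r)_{n+1,k} = M(r)_{n,k−1} + 2r·M(r)_{n,k} + r²·M(r)_{n,k+1}. -/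
open PowerSeries Finset

/-- The generating function of the Catalan numbers,
`C(X) = ∑_{n≥0} (1/(n+1))·C(2n,n)·Xⁿ`. -/
noncomputable def catGF : PowerSeries ℚ :=
  PowerSeries.mk fun n => (1 / ((n : ℚ) + 1)) * (Nat.choose (2 * n) n : ℚ)

lemma catGF_eq : catGF = PowerSeries.mk fun n => (catalan n : ℚ) := by
  ext n
  simp only [catGF, coeff_mk]
  have h : ((n : ℚ) + 1) * catalan n = (Nat.choose (2 * n) n : ℚ) := by
    have := succ_mul_catalan_eq_centralBinom n
    rw [Nat.centralBinom] at this
    exact_mod_cast congrArg (Nat.cast : ℕ → ℚ) this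
  have hne : ((n : ℚ) + 1) ≠ 0 := by positivity
  field_simp
  linarith [h]

lemma catGF_sq : catGF = 1 + X * catGF ^ 2 := by
  rw [catGF_eq]
  ext n
  cases n with
  | zero => simp
  | succ n =>
    rw [map_add, coeff_succ_X_mul, pow_two, coeff_mul]
    simp only [coeff_mk, coeff_one, Nat.succ_ne_zero, if_false, zero_add]
    rw [catalan_succ']
    push_cast
    rfl

lemma rescale_X (r : ℚ) : rescale r (X : PowerSeries ℚ) = C r * X := by
  ext n
  rw [coeff_rescale, coeff_C_mul, coeff_X]
  rcases eq_or_ne n 1 with h | h <;> simp [h]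

lemma B_eq (r : ℚ) :
    rescale r catGF = 1 + C r * X * (rescale r catGF) ^ 2 := by
  conv_lhs => rw [catGF_sq]
  rw [map_add, map_one, map_mul, map_pow, rescale_X]

lemma g_eq (r : ℚ) :
    (rescale r catGF) ^ 2 = (1 + C r * X * (rescale r catGF) ^ 2) ^ 2 := by
  conv_lhs => rw [B_eq r]

theorem moment_array_tridiagonal_production (r : ℚ) :
    ∀ n k : ℕ,
      riordan ((rescale r catGF) ^ 2) (X * (rescale r catGF) ^ 2) (n + 1) k
        = (if k = 0 then 0
            else riordan ((rescale r catGF) ^ 2) (X * (rescale r catGF) ^ 2) n (k - 1))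
          + 2 * r * riordan ((rescale r catGF) ^ 2) (X * (rescale r catGF) ^ 2) n k
          + r ^ 2 * riordan ((rescale r catGF) ^ 2) (X * (rescale r catGF) ^ 2) n (k + 1) := by
  intro n k
  set g : PowerSeries ℚ := (rescale r catGF) ^ 2 with hgdef
  set f : PowerSeries ℚ := X * g with hfdef
  have hg : g = (1 + C r * X * g) ^ 2 := g_eq r
  have h2 : C (2*r) = 2 * C r := by rw [map_mul, map_ofNat]
  have h3 : C (r^2) = (C r)^2 := map_pow _ _ _
  unfold riordan
  cases k with
  | zero =>
    have key : g * f ^ 0 = 1 + X * (C (2*r) * (g * f ^ 0) + C (r^2) * (g * f ^ 1)) := by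
      rw [h2, h3, hfdef]
      ring_nf
      linear_combination hg
    have hc := congrArg (coeff (n+1)) key
    rw [map_add, coeff_succ_X_mul, map_add, coeff_C_mul, coeff_C_mul, coeff_one] at hc
    simp only [Nat.succ_ne_zero, if_false, if_pos rfl, if_true] at hc ⊢
    rw [hc]
    ring
  | succ k =>
    have key : g * f ^ (k+1)
        = X * (g * f ^ k + C (2*r) * (g * f ^ (k+1)) + C (r^2) * (g * f ^ (k+2))) := by
      rw [h2, h3, hfdef]
      ring_nf
      linear_combination (X * (X * g)^k * g) * hg
    have hc := congrArg (coeff (n+1)) key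
    rw [coeff_succ_X_mul, map_add, map_add, coeff_C_mul, coeff_C_mul] at hc
    simp only [Nat.succ_ne_zero, if_false, Nat.add_sub_cancel]
    rw [hc]
end
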